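/- arXiv:2203.12089 — 4 statements merged into one kernel-verified Lean document; each statement's English description precedes it below -/
import Mathlib

section
/- Let φ > 0, δ ≥ 0, k₁ > 0, T > 0. Let x_i, v_i, x_p, v_p : [0, T] → ℝ be differentiable with x_i'(t) = v_i(t), x_p'(t) = v_p(t), and v_i'(t) = u_i(t) for some function u_i. If x_p(0) − x_i(0) − φ·v_i(0) − δ ≥ 0 and for all t ∈ [0, T]: v_p(t) − v_i(t) − φ·u_i(t) + k₁·(x_p(t) − x_i(t) − φ·v_i(t) − δ) ≥ 0, then x_p(t) − x_i(t) − φ·v_i(t) − δ ≥ 0 for all t ∈ [0, T]; i.e., the rear-end safety constraint z(t) ≥ φ·v_i(t) + δ holds for all t. -/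
/-!
The barrier `b = xp - xi - φ vi - δ` satisfies `b' + k₁ b ≥ 0`, so `t ↦ exp (k₁ t) b t` has
nonnegative derivative `exp (k₁ t) (b' + k₁ b)`. It is therefore monotone on `[0, T]`, and
nonnegative there because it is at `0`.
-/

open Set Real

theorem hasDerivAt_exp_mul_mul {b : ℝ → ℝ} {b' k t : ℝ} (hb : HasDerivAt b b' t) :
    HasDerivAt (fun s => exp (k * s) * b s) (exp (k * t) * (b' + k * b t)) t := by
  have hexp : HasDerivAt (fun s => exp (k * s)) (exp (k * t) * k) t :=
    ((hasDerivAt_id t).const_mul k).exp.congr_deriv (by simp)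
  exact (hexp.mul hb).congr_deriv (by ring)

theorem nonneg_of_hasDerivAt_add_mul_nonneg {b b' : ℝ → ℝ} {k a T : ℝ}
    (hb : ∀ t ∈ Icc a T, HasDerivAt b (b' t) t) (hb' : ∀ t ∈ Icc a T, 0 ≤ b' t + k * b t)
    (ha : 0 ≤ b a) : ∀ t ∈ Icc a T, 0 ≤ b t := by
  set g : ℝ → ℝ := fun s => exp (k * s) * b s
  have hg : ∀ t ∈ Icc a T, HasDerivAt g (exp (k * t) * (b' t + k * b t)) t :=
    fun t ht => hasDerivAt_exp_mul_mul (hb t ht)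
  have hmono : MonotoneOn g (Icc a T) := by
    refine monotoneOn_of_deriv_nonneg (convex_Icc a T)
      (fun t ht => (hg t ht).continuousAt.continuousWithinAt) (fun t ht => ?_) (fun t ht => ?_)
    all_goals rw [interior_Icc] at ht
    · exact (hg t (Ioo_subset_Icc_self ht)).differentiableAt.differentiableWithinAt
    · rw [(hg t (Ioo_subset_Icc_self ht)).deriv]
      exact mul_nonneg (exp_pos _).le (hb' t (Ioo_subset_Icc_self ht))
  intro t ht
  have hgt : 0 ≤ g t :=
    calc 0 ≤ g a := mul_nonneg (exp_pos _).le ha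
      _ ≤ g t := hmono (left_mem_Icc.2 (ht.1.trans ht.2)) ht ht.1
  exact (mul_nonneg_iff_of_pos_left (exp_pos _)).mp hgt

theorem stmt5_general (φ δ k₁ T : ℝ)
    (xi vi xp vp ui : ℝ → ℝ)
    (hxi : ∀ t ∈ Set.Icc (0:ℝ) T, HasDerivAt xi (vi t) t)
    (hxp : ∀ t ∈ Set.Icc (0:ℝ) T, HasDerivAt xp (vp t) t)
    (hvi : ∀ t ∈ Set.Icc (0:ℝ) T, HasDerivAt vi (ui t) t)
    (hinit : 0 ≤ xp 0 - xi 0 - φ * vi 0 - δ)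
    (hcbf : ∀ t ∈ Set.Icc (0:ℝ) T,
      0 ≤ vp t - vi t - φ * ui t + k₁ * (xp t - xi t - φ * vi t - δ)) :
    ∀ t ∈ Set.Icc (0:ℝ) T, 0 ≤ xp t - xi t - φ * vi t - δ :=
  nonneg_of_hasDerivAt_add_mul_nonneg (b := fun t => xp t - xi t - φ * vi t - δ)
    (fun t ht => (((hxp t ht).sub (hxi t ht)).sub ((hvi t ht).const_mul φ)).sub_const δ)
    hcbf hinit

/-- Correctness of the CBF constraint for rear-end safety: if the rear-end
safety CBF condition L_f b₁ + (L_g b₁)·u_i + k₁·b₁ ≥ 0 holds along the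
trajectory and b₁(0) ≥ 0, then b₁(t) ≥ 0 for all t ∈ [0,T]. -/
theorem stmt5 (φ δ k₁ T : ℝ) (hφ : 0 < φ) (hδ : 0 ≤ δ) (hk : 0 < k₁) (hT : 0 < T)
    (xi vi xp vp ui : ℝ → ℝ)
    (hxi : ∀ t ∈ Set.Icc (0:ℝ) T, HasDerivAt xi (vi t) t)
    (hxp : ∀ t ∈ Set.Icc (0:ℝ) T, HasDerivAt xp (vp t) t)
    (hvi : ∀ t ∈ Set.Icc (0:ℝ) T, HasDerivAt vi (ui t) t)
    (hinit : 0 ≤ xp 0 - xi 0 - φ * vi 0 - δ)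
    (hcbf : ∀ t ∈ Set.Icc (0:ℝ) T,
      0 ≤ vp t - vi t - φ * ui t + k₁ * (xp t - xi t - φ * vi t - δ)) :
    ∀ t ∈ Set.Icc (0:ℝ) T, 0 ≤ xp t - xi t - φ * vi t - δ :=
  stmt5_general φ δ k₁ T xi vi xp vp ui hxi hxp hvi hinit hcbf
end

section
/- Let φ > 0, L > 0, δ ≥ 0, k₂ > 0, T > 0. Let x_i, v_i, x_j, v_j : [0, T] → ℝ be differentiable with x_i'(t) = v_i(t), x_j'(t) = v_j(t), and v_i'(t) = u_i(t) for some function u_i. If x_j(0) − x_i(0) − (φ·x_i(0)/L)·v_i(0) − δ ≥ 0 and for all t ∈ [0, T]: v_j(t) − v_i(t) − (φ/L)·v_i(t)² − (φ·x_i(t)/L)·u_i(t) + k₂·(x_j(t) − x_i(t) − (φ·x_i(t)/L)·v_i(t) − δ) ≥ 0, then x_j(t) − x_i(t) − (φ·x_i(t)/L)·v_i(t) − δ ≥ 0 for all t ∈ [0, T]. -/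
open Set Real

/-- Multiplying by the integrating factor `exp (k t)` turns `b' + k b ≥ 0` into monotonicity. -/
theorem monotoneOn_mul_exp_of_hasDerivAt {b b' : ℝ → ℝ} {k a T : ℝ}
    (hb : ∀ t ∈ Icc a T, HasDerivAt b (b' t) t) (hbound : ∀ t ∈ Icc a T, 0 ≤ b' t + k * b t) :
    MonotoneOn (fun t => b t * exp (k * t)) (Icc a T) := by
  have hderiv : ∀ t ∈ Icc a T,
      HasDerivAt (fun s => b s * exp (k * s)) ((b' t + k * b t) * exp (k * t)) t := by
    intro t ht
    have hexp : HasDerivAt (fun s => exp (k * s)) (exp (k * t) * k) t :=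
      ((hasDerivAt_id t).const_mul k).exp.congr_deriv (by simp)
    exact ((hb t ht).mul hexp).congr_deriv (by ring)
  refine monotoneOn_of_hasDerivWithinAt_nonneg (convex_Icc a T)
    (fun t ht => (hderiv t ht).continuousAt.continuousWithinAt)
    (fun t ht => (hderiv t (interior_subset ht)).hasDerivWithinAt) (fun t ht => ?_)
  exact mul_nonneg (hbound t (interior_subset ht)) (exp_pos _).le

theorem nonneg_of_hasDerivAt_of_add_mul_nonneg {b b' : ℝ → ℝ} {k a T : ℝ}
    (hb : ∀ t ∈ Icc a T, HasDerivAt b (b' t) t) (hbound : ∀ t ∈ Icc a T, 0 ≤ b' t + k * b t)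
    (ha : 0 ≤ b a) : ∀ t ∈ Icc a T, 0 ≤ b t := by
  intro t ht
  have hmono := monotoneOn_mul_exp_of_hasDerivAt hb hbound
    (left_mem_Icc.mpr (ht.1.trans ht.2)) ht ht.1
  have : 0 ≤ b t * exp (k * t) := (mul_nonneg ha (exp_pos _).le).trans hmono
  exact nonneg_of_mul_nonneg_left this (exp_pos _)

theorem hasDerivAt_safeMergingBarrier {xi vi xj vj ui : ℝ → ℝ} {φ L δ t : ℝ}
    (hxi : HasDerivAt xi (vi t) t) (hxj : HasDerivAt xj (vj t) t) (hvi : HasDerivAt vi (ui t) t) :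
    HasDerivAt (fun s => xj s - xi s - (φ * xi s / L) * vi s - δ)
      (vj t - vi t - (φ / L) * (vi t)^2 - (φ * xi t / L) * ui t) t := by
  have hΦ : HasDerivAt (fun s => φ * xi s / L) (φ * vi t / L) t := (hxi.const_mul φ).div_const L
  exact (((hxj.sub hxi).sub (hΦ.mul hvi)).sub_const δ).congr_deriv (by ring)

theorem stmt6_general (φ L δ k₂ T : ℝ)
    (xi vi xj vj ui : ℝ → ℝ)
    (hxi : ∀ t ∈ Set.Icc (0:ℝ) T, HasDerivAt xi (vi t) t)
    (hxj : ∀ t ∈ Set.Icc (0:ℝ) T, HasDerivAt xj (vj t) t)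
    (hvi : ∀ t ∈ Set.Icc (0:ℝ) T, HasDerivAt vi (ui t) t)
    (hinit : 0 ≤ xj 0 - xi 0 - (φ * xi 0 / L) * vi 0 - δ)
    (hcbf : ∀ t ∈ Set.Icc (0:ℝ) T,
      0 ≤ vj t - vi t - (φ / L) * (vi t)^2 - (φ * xi t / L) * ui t
          + k₂ * (xj t - xi t - (φ * xi t / L) * vi t - δ)) :
    ∀ t ∈ Set.Icc (0:ℝ) T, 0 ≤ xj t - xi t - (φ * xi t / L) * vi t - δ :=
  nonneg_of_hasDerivAt_of_add_mul_nonneg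
    (b := fun s => xj s - xi s - (φ * xi s / L) * vi s - δ)
    (fun t ht => hasDerivAt_safeMergingBarrier (hxi t ht) (hxj t ht) (hvi t ht)) hcbf hinit

/-- Correctness of the CBF constraint for safe merging: if the safe-merging
CBF condition L_f b₂ + (L_g b₂)·u_i + k₂·b₂ ≥ 0 holds along the trajectory
and b₂(0) ≥ 0, then b₂(t) ≥ 0 for all t ∈ [0,T]. -/
theorem stmt6 (φ L δ k₂ T : ℝ) (hφ : 0 < φ) (hL : 0 < L) (hδ : 0 ≤ δ) (hk : 0 < k₂) (hT : 0 < T)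
    (xi vi xj vj ui : ℝ → ℝ)
    (hxi : ∀ t ∈ Set.Icc (0:ℝ) T, HasDerivAt xi (vi t) t)
    (hxj : ∀ t ∈ Set.Icc (0:ℝ) T, HasDerivAt xj (vj t) t)
    (hvi : ∀ t ∈ Set.Icc (0:ℝ) T, HasDerivAt vi (ui t) t)
    (hinit : 0 ≤ xj 0 - xi 0 - (φ * xi 0 / L) * vi 0 - δ)
    (hcbf : ∀ t ∈ Set.Icc (0:ℝ) T,
      0 ≤ vj t - vi t - (φ / L) * (vi t)^2 - (φ * xi t / L) * ui t
          + k₂ * (xj t - xi t - (φ * xi t / L) * vi t - δ)) :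
    ∀ t ∈ Set.Icc (0:ℝ) T, 0 ≤ xj t - xi t - (φ * xi t / L) * vi t - δ :=
  stmt6_general φ L δ k₂ T xi vi xj vj ui hxi hxj hvi hinit hcbf
end

section
/- Let φ, L, k₂ > 0, δ ≥ 0, and u ∈ ℝ. Let B_i, B_j ⊆ ℝ² be sets with B_i ⊆ [x̲, x̄] × ℝ for some 0 ≤ x̲ ≤ x̄. Define m_g = −φ·x̄/L if u ≥ 0 and m_g = −φ·x̲/L if u < 0. Suppose m_f, m_γ ∈ ℝ satisfy: for every (ŷ_i, ŵ_i) ∈ B_i and (ŷ_j, ŵ_j) ∈ B_j with ŷ_j − ŷ_i − (φ·ŷ_i/L)·ŵ_i − δ ≥ 0, one has m_f ≤ ŵ_j − ŵ_i − (φ/L)·ŵ_i² and m_γ ≤ k₂·(ŷ_j − ŷ_i − (φ·ŷ_i/L)·ŵ_i − δ). If m_f + m_g·u + m_γ ≥ 0, then for every (x_i, v_i) ∈ B_i and (x_j, v_j) ∈ B_j with x_j − x_i − (φ·x_i/L)·v_i − δ ≥ 0, it holds that v_j − v_i − (φ/L)·v_i² − (φ·x_i/L)·u + k₂·(x_j −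 x_i − (φ·x_i/L)·v_i − δ) ≥ 0. -/
/-- Key step behind the event-triggered safe-merging condition: the minimized
version of the safe-merging CBF condition implies the pointwise CBF condition
at every state within the event bounds (on the feasible set {b₂ ≥ 0}). -/
theorem stmt8 (φ L k₂ δ u xlo xhi : ℝ) (hφ : 0 < φ) (hL : 0 < L) (hk : 0 < k₂)
    (hδ : 0 ≤ δ) (hx0 : 0 ≤ xlo) (hxx : xlo ≤ xhi)
    (Bi Bj : Set (ℝ × ℝ))
    (hBi : Bi ⊆ Set.Icc xlo xhi ×ˢ (Set.univ : Set ℝ))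
    (mf mγ mg : ℝ)
    (hmg : mg = if 0 ≤ u then -(φ * xhi / L) else -(φ * xlo / L))
    (hmf : ∀ p ∈ Bi, ∀ q ∈ Bj, 0 ≤ q.1 - p.1 - (φ * p.1 / L) * p.2 - δ →
        mf ≤ q.2 - p.2 - (φ / L) * p.2 ^ 2)
    (hmγ : ∀ p ∈ Bi, ∀ q ∈ Bj, 0 ≤ q.1 - p.1 - (φ * p.1 / L) * p.2 - δ →
        mγ ≤ k₂ * (q.1 - p.1 - (φ * p.1 / L) * p.2 - δ))
    (hcond : 0 ≤ mf + mg * u + mγ) :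
    ∀ p ∈ Bi, ∀ q ∈ Bj, 0 ≤ q.1 - p.1 - (φ * p.1 / L) * p.2 - δ →
      0 ≤ q.2 - p.2 - (φ / L) * p.2 ^ 2 - (φ * p.1 / L) * u
          + k₂ * (q.1 - p.1 - (φ * p.1 / L) * p.2 - δ) := by
  intro p hp q hq hb
  have hmem := hBi hp
  have hlo : xlo ≤ p.1 := hmem.1.1
  have hhi : p.1 ≤ xhi := hmem.1.2
  have h1 := hmf p hp q hq hb
  have h2 := hmγ p hp q hq hb
  have hgu : mg * u ≤ -(φ * p.1 / L) * u := by
    rcases le_or_gt 0 u with hu | hu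
    · rw [hmg, if_pos hu]
      apply mul_le_mul_of_nonneg_right _ hu
      have : φ * p.1 ≤ φ * xhi := by nlinarith
      have := div_le_div_of_nonneg_right this hL.le
      linarith
    · rw [hmg, if_neg (not_le.mpr hu)]
      have : φ * xlo ≤ φ * p.1 := by nlinarith
      have h3 : φ * xlo / L ≤ φ * p.1 / L := by
        apply div_le_div_of_nonneg_right this hL.le
      nlinarith
  linarith
end

section
/- Let s_x, s_v, V, U > 0, let t_k ∈ ℝ and t' > t_k, and let x, v : [t_k, t'] → ℝ be differentiable with x'(t) = v(t) and v'(t) = u for a constant u with |u| ≤ U, and suppose |v(t)| ≤ V for all t ∈ [t_k, t']. Then for every t ∈ [t_k, t'] with t − t_k ≤ min{s_x/V, s_v/U}, it holds that |x(t) − x(t_k)| ≤ s_x and |v(t) − v(t_k)| ≤ s_v. In particular, the time for the state (x, v) to reach the boundary of the box {(y, w) : |y − x(t_k)| ≤ s_x, |w − v(t_k)| ≤ s_v} is at least min{s_x/V, s_v/U} > 0. -/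
/-- No-Zeno property of the event-triggering scheme: with bounded speed and
bounded constant control over an inter-event interval, the state stays inside
the event-triggering box of radii (s_x, s_v) for at least
min{s_x/V, s_v/U} > 0 time. -/
theorem stmt11 (s_x s_v V U tk t' : ℝ) (hsx : 0 < s_x) (hsv : 0 < s_v)
    (hV : 0 < V) (hU : 0 < U) (ht : tk < t')
    (x v : ℝ → ℝ) (u : ℝ)
    (hx : ∀ t ∈ Set.Icc tk t', HasDerivAt x (v t) t)
    (hv : ∀ t ∈ Set.Icc tk t', HasDerivAt v u t)
    (huU : |u| ≤ U)
    (hvV : ∀ t ∈ Set.Icc tk t', |v t| ≤ V) :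
    ∀ t ∈ Set.Icc tk t', t - tk ≤ min (s_x / V) (s_v / U) →
      |x t - x tk| ≤ s_x ∧ |v t - v tk| ≤ s_v := by
  intro t htI hmin
  have htk : tk ∈ Set.Icc tk t' := Set.left_mem_Icc.mpr ht.le
  have hconv : Convex ℝ (Set.Icc tk t') := convex_Icc _ _
  have hxb : ‖x t - x tk‖ ≤ V * ‖t - tk‖ :=
    hconv.norm_image_sub_le_of_norm_hasDerivWithin_le
      (fun s hs => (hx s hs).hasDerivWithinAt)
      (fun s hs => hvV s hs) htk htI
  have hvb : ‖v t - v tk‖ ≤ U * ‖t - tk‖ :=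
    hconv.norm_image_sub_le_of_norm_hasDerivWithin_le
      (fun s hs => (hv s hs).hasDerivWithinAt)
      (fun s _ => huU) htk htI
  have htt : ‖t - tk‖ = t - tk := by
    rw [Real.norm_eq_abs, abs_of_nonneg (sub_nonneg.mpr htI.1)]
  constructor
  · calc |x t - x tk| ≤ V * (t - tk) := by rw [← htt]; exact hxb
      _ ≤ V * (s_x / V) := by
          have := le_trans hmin (min_le_left _ _)
          nlinarith
      _ = s_x := by field_simp
  · calc |v t - v tk| ≤ U * (t - tk) := by rw [← htt]; exact hvb
      _ ≤ U * (s_v / U) := by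
          have := le_trans hmin (min_le_right _ _)
          nlinarith
      _ = s_v := by field_simp
end
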